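/- Let F be a standard Borel space. Then the graph of the sequential extension function, the set {(S, x, T) ∈ Finset F × F × Finset F : T = insert x S}, is measurable in the product σ-algebra of 𝔻, the Borel σ-algebra of F, and 𝔻; equivalently, its indicator function ξ(S, x, T) (equal to 1 if insert x S = T and 0 otherwise) is a measurable real-valued function. -/

import Mathlib

/-!
Choose a Polish topology on `F` and a countable basis of it. In a `T₁` space a basic open set
around `x` can avoid the finitely many other points of `S`, so `x ∈ S` iff every basic open set
around `x` meets `S`, and a finite set is determined by the basic open sets it meets. Since `S`
meets a measurable `B` iff `ι S B ≠ 0`, membership, hence `(S, x) ↦ insert x S`, is measurable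
and `𝔻` is countably separated, so its diagonal is measurable; the graph of `insert` is a
preimage of that diagonal.
-/

open MeasureTheory

/-- The canonical embedding of a database instance (a finite set of facts)
into the space of measures: `S ↦ ∑_{x ∈ S} δ_x`. -/
noncomputable def iota {F : Type*} [MeasurableSpace F] (S : Finset F) : Measure F :=
  ∑ x ∈ S, Measure.dirac x

/-- The instance space `𝔻`: `Finset F` equipped with the σ-algebra comapped along `ι`
from the canonical σ-algebra on `Measure F`. -/
noncomputable instance instanceSpace (F : Type*) [MeasurableSpace F] : MeasurableSpace (Finset F) :=
  MeasurableSpace.comap iota inferInstance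

open Set TopologicalSpace

theorem MeasurableSpace.CountablySeparated.measurableEq {α : Type*} [MeasurableSpace α]
    [CountablySeparated α] : MeasurableEq α := by
  obtain ⟨_, _, _, _⟩ := exists_opensMeasurableSpace_of_countablySeparated α
  infer_instance

section Measurability

variable {F : Type*} [MeasurableSpace F]

theorem measurable_iota : Measurable (iota : Finset F → Measure F) :=
  comap_measurable iota

theorem measurable_of_measurable_iota_comp {α : Type*} [MeasurableSpace α] {f : α → Finset F}
    (hf : Measurable (iota ∘ f)) : Measurable f := by
  rintro _ ⟨t, ht, rfl⟩
  exact hf ht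

theorem iota_apply_eq_zero_iff {S : Finset F} {B : Set F} (hB : MeasurableSet B) :
    iota S B = 0 ↔ ∀ y ∈ S, y ∉ B := by
  simp [iota, Measure.finsetSum_apply, Finset.sum_eq_zero_iff, Measure.dirac_apply' _ hB]

theorem iota_insert [DecidableEq F] (S : Finset F) (x : F) :
    iota (insert x S) = if x ∈ S then iota S else Measure.dirac x + iota S := by
  split_ifs with hx
  · rw [Finset.insert_eq_of_mem hx]
  · exact Finset.sum_insert hx

theorem measurableSet_setOf_exists_mem {B : Set F} (hB : MeasurableSet B) :
    MeasurableSet {S : Finset F | ∃ y ∈ S, y ∈ B} := by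
  have hset : {S : Finset F | ∃ y ∈ S, y ∈ B} = (fun S => iota S B) ⁻¹' {0}ᶜ := by
    ext S
    simp [iota_apply_eq_zero_iff hB]
  rw [hset]
  exact ((Measure.measurable_coe hB).comp measurable_iota) (measurableSet_singleton 0).compl

end Measurability

section Topology

variable {F : Type*} [TopologicalSpace F] [SecondCountableTopology F] [T1Space F]

theorem exists_mem_countableBasis_isolating (x : F) (s : Finset F) :
    ∃ B ∈ countableBasis F, x ∈ B ∧ ∀ y ∈ s, y ∈ B → y = x := by
  classical
  have hopen : IsOpen ((s.erase x : Set F)ᶜ) := (s.erase x).isClosed.isOpen_compl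
  obtain ⟨B, hB, hxB, hBsub⟩ := (isBasis_countableBasis F).exists_subset_of_mem_open
    (by simp : x ∈ ((s.erase x : Set F)ᶜ)) hopen
  refine ⟨B, hB, hxB, fun y hy hyB => ?_⟩
  by_contra hyx
  exact hBsub hyB (Finset.mem_erase.2 ⟨hyx, hy⟩)

theorem mem_iff_forall_countableBasis {S : Finset F} {x : F} :
    x ∈ S ↔ ∀ B ∈ countableBasis F, x ∈ B → ∃ y ∈ S, y ∈ B := by
  refine ⟨fun hx _ _ hxB => ⟨x, hx, hxB⟩, fun h => ?_⟩
  obtain ⟨B, hB, hxB, hisol⟩ := exists_mem_countableBasis_isolating x S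
  obtain ⟨y, hy, hyB⟩ := h B hB hxB
  rwa [← hisol y hy hyB]

variable [MeasurableSpace F] [OpensMeasurableSpace F]

theorem measurableSet_setOf_mem :
    MeasurableSet {p : Finset F × F | p.2 ∈ p.1} := by
  have hset : {p : Finset F × F | p.2 ∈ p.1} =
      ⋂ B ∈ countableBasis F, {p | p.2 ∈ B → ∃ y ∈ p.1, y ∈ B} := by
    ext p
    simpa only [mem_iInter, mem_ofPred_eq] using mem_iff_forall_countableBasis
  rw [hset]
  refine MeasurableSet.biInter (countable_countableBasis F) fun B hB => ?_
  have hBm : MeasurableSet B := (isOpen_of_mem_countableBasis hB).measurableSet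
  have hmeets : MeasurableSet {p : Finset F × F | ∃ y ∈ p.1, y ∈ B} :=
    measurable_fst (measurableSet_setOf_exists_mem hBm)
  exact ((measurable_snd hBm).mem.imp hmeets.mem).setOf

theorem countablySeparated_finset : MeasurableSpace.CountablySeparated (Finset F) := by
  refine ⟨⟨(fun B => {S : Finset F | ∃ y ∈ S, y ∈ B}) '' countableBasis F,
    (countable_countableBasis F).image _, ?_, ?_⟩⟩
  · rintro _ ⟨B, hB, rfl⟩
    exact measurableSet_setOf_exists_mem (isOpen_of_mem_countableBasis hB).measurableSet
  · intro S _ T _ hST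
    ext x
    refine mem_iff_forall_countableBasis.trans
      (Iff.trans ?_ mem_iff_forall_countableBasis.symm)
    exact forall₂_congr fun B hB => imp_congr_right fun _ => hST _ (mem_image_of_mem _ hB)

theorem measurable_insert [DecidableEq F] :
    Measurable fun p : Finset F × F => insert p.2 p.1 := by
  refine measurable_of_measurable_iota_comp ?_
  simp only [Function.comp_def, iota_insert]
  exact Measurable.ite measurableSet_setOf_mem (measurable_iota.comp measurable_fst)
    ((Measure.measurable_dirac.comp measurable_snd).add (measurable_iota.comp measurable_fst))

end Topology

/-- The graph of the sequential extension function,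
`{((S, x), T) : T = insert x S}`, is measurable in the product σ-algebra of
`𝔻`, the Borel σ-algebra of `F`, and `𝔻`; equivalently, its indicator function
`ξ(S, x, T)` is a measurable real-valued function. -/
theorem measurableSet_graph_ext (F : Type*) [MeasurableSpace F] [StandardBorelSpace F]
    [DecidableEq F] :
    MeasurableSet {q : (Finset F × F) × Finset F | q.2 = insert q.1.2 q.1.1} ∧
    Measurable (Set.indicator
      {q : (Finset F × F) × Finset F | insert q.1.2 q.1.1 = q.2}
      (fun _ => (1 : ℝ))) := by
  let := upgradeStandardBorel F
  have := (countablySeparated_finset (F := F)).measurableEq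
  have hgraph : MeasurableSet {q : (Finset F × F) × Finset F | q.2 = insert q.1.2 q.1.1} :=
    measurableSet_eq_fun measurable_snd (measurable_insert.comp measurable_fst)
  refine ⟨hgraph, ?_⟩
  simp_rw [eq_comm (a := insert _ _)]
  exact measurable_const.indicator hgraph
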